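/- arXiv:1710.07861 — 2 statements merged into one kernel-verified Lean document; each statement's English description precedes it below -/
import Mathlib

section
/- Let b = −25 and c = 0.04. There do not exist complex numbers V₄, V₅ with 0.9 ≤ |V₄| ≤ 1.1, 0.9 ≤ |V₅| ≤ 1.1 such that 0 = conj(i·b + i·c)·|V₄|² − conj(i·b)·V₄·conj(V₅) and 0 = conj(i·b + i·c)·|V₅|² − conj(i·b)·conj(V₄)·V₅. -/
open Complex

/-- Taking moduli, the two flow equations read `‖a‖ ‖V‖² = ‖b‖ ‖V‖ ‖W‖ = ‖a‖ ‖W‖²`; unless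
`‖a‖ = ‖b‖`, this forces a zero voltage. -/
lemma eq_zero_or_eq_zero_of_line_flows_eq_zero {a b V W : ℂ} (hab : ‖a‖ ≠ ‖b‖)
    (hV : (starRingEnd ℂ) a * (‖V‖ : ℂ) ^ 2 = (starRingEnd ℂ) b * V * (starRingEnd ℂ) W)
    (hW : (starRingEnd ℂ) a * (‖W‖ : ℂ) ^ 2 = (starRingEnd ℂ) b * (starRingEnd ℂ) V * W) :
    V = 0 ∨ W = 0 := by
  have nV := congrArg norm hV
  have nW := congrArg norm hW
  simp only [norm_mul, norm_pow, norm_conj, norm_real, norm_norm] at nV nW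
  rw [← norm_eq_zero, ← norm_eq_zero (a := W)]
  by_cases ha : ‖a‖ = 0
  · rw [ha, zero_mul, eq_comm, mul_assoc, mul_eq_zero, mul_eq_zero] at nV
    exact nV.resolve_left (ha ▸ hab.symm)
  · have hVW : ‖V‖ = ‖W‖ := by
      have hsq : ‖V‖ ^ 2 = ‖W‖ ^ 2 := mul_left_cancel₀ ha (by rw [nV, nW])
      exact (pow_left_inj₀ (norm_nonneg V) (norm_nonneg W) two_ne_zero).mp hsq
    rw [← hVW, or_self, ← sq_eq_zero_iff]
    have : (‖a‖ - ‖b‖) * ‖V‖ ^ 2 = 0 := by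
      rw [sub_mul, nV, ← hVW]; ring
    exact (mul_eq_zero.mp this).resolve_left (sub_ne_zero.mpr hab)

theorem five_bus_line_infeasible :
    ¬ ∃ V₄ V₅ : ℂ,
      0.9 ≤ ‖V₄‖ ∧ ‖V₄‖ ≤ 1.1 ∧
      0.9 ≤ ‖V₅‖ ∧ ‖V₅‖ ≤ 1.1 ∧
      0 = (starRingEnd ℂ) (I * ((-25 : ℝ) : ℂ) + I * ((0.04 : ℝ) : ℂ)) * ((‖V₄‖ : ℂ)) ^ 2
            - (starRingEnd ℂ) (I * ((-25 : ℝ) : ℂ)) * V₄ * (starRingEnd ℂ) V₅ ∧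
      0 = (starRingEnd ℂ) (I * ((-25 : ℝ) : ℂ) + I * ((0.04 : ℝ) : ℂ)) * ((‖V₅‖ : ℂ)) ^ 2
            - (starRingEnd ℂ) (I * ((-25 : ℝ) : ℂ)) * (starRingEnd ℂ) V₄ * V₅ := by
  rintro ⟨V₄, V₅, hV₄, -, hV₅, -, flow₄, flow₅⟩
  have hnorm : ‖I * ((-25 : ℝ) : ℂ) + I * ((0.04 : ℝ) : ℂ)‖ ≠ ‖I * ((-25 : ℝ) : ℂ)‖ := by
    rw [← mul_add, ← ofReal_add, norm_mul, norm_mul, norm_I, norm_real, norm_real]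
    norm_num
  rcases eq_zero_or_eq_zero_of_line_flows_eq_zero hnorm (sub_eq_zero.mp flow₄.symm)
      (sub_eq_zero.mp flow₅.symm) with h | h
  · rw [h, norm_zero] at hV₄; norm_num at hV₄
  · rw [h, norm_zero] at hV₅; norm_num at hV₅
end

section
/- For complex numbers V_i, V_j and real numbers θl, θu with −π/2 < θl ≤ θu < π/2, if V_i ≠ 0, V_j ≠ 0 and the argument of V_i·conj(V_j) lies in [θl, θu], then W_ij = V_i·conj(V_j) satisfies tan(θl)·Re(W_ij) ≤ Im(W_ij) ≤ tan(θu)·Re(W_ij). -/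
open Real

theorem angle_difference_constraint (Vi Vj : ℂ) (θl θu : ℝ)
    (hl : -(π / 2) < θl) (hlu : θl ≤ θu) (hu : θu < π / 2)
    (hVi : Vi ≠ 0) (hVj : Vj ≠ 0)
    (harg1 : θl ≤ (Vi * (starRingEnd ℂ) Vj).arg)
    (harg2 : (Vi * (starRingEnd ℂ) Vj).arg ≤ θu) :
    Real.tan θl * (Vi * (starRingEnd ℂ) Vj).re ≤ (Vi * (starRingEnd ℂ) Vj).im ∧
    (Vi * (starRingEnd ℂ) Vj).im ≤ Real.tan θu * (Vi * (starRingEnd ℂ) Vj).re := by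
  set W := Vi * (starRingEnd ℂ) Vj with hWdef
  have hW : W ≠ 0 := mul_ne_zero hVi (by simpa using hVj)
  have hlt : -(π/2) < W.arg := lt_of_lt_of_le hl harg1
  have hgt : W.arg < π/2 := lt_of_le_of_lt harg2 hu
  have hre : 0 < W.re := by
    have := (Complex.abs_arg_lt_pi_div_two_iff (z := W)).mp (abs_lt.mpr ⟨hlt, hgt⟩)
    rcases this with h | h
    · exact h
    · exact absurd h hW
  have htan : Real.tan W.arg = W.im / W.re := Complex.tan_arg W
  have h1 : Real.tan θl ≤ Real.tan W.arg :=
    Real.strictMonoOn_tan.monotoneOn ⟨hl, by linarith⟩ ⟨hlt, hgt⟩ harg1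
  have h2 : Real.tan W.arg ≤ Real.tan θu :=
    Real.strictMonoOn_tan.monotoneOn ⟨hlt, hgt⟩ ⟨by linarith, hu⟩ harg2
  constructor
  · have := mul_le_mul_of_nonneg_right h1 hre.le
    rw [htan, div_mul_cancel₀ _ hre.ne'] at this
    linarith
  · have := mul_le_mul_of_nonneg_right h2 hre.le
    rw [htan, div_mul_cancel₀ _ hre.ne'] at this
    linarith
end
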